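/- Let X be a real Hilbert space, U a closed linear subspace, g : X → (−∞,+∞] proper lower semicontinuous convex, T = Id − P_U + Prox_g ∘ R_U, and v = P_{closure(ran(Id−T))}(0). Assume: v = P_{closure(U − dom g)}(0) (hence v ∈ U^⊥); 0 ∈ U^⊥ + dom g*; Z = {x : v ∈ N_U(x) + ∂g(x − v)} is nonempty; and the projector P_Z is weak-to-weak continuous. Let x ∈ X and set y(x) = lim_{n→∞} P_F(nv + T^n x), where F = {z : z = T(z + v)} (this limit exists). Then: P_U T^n x converges weakly to P_U y(x), which is a minimizer of g(· − v) over U; T^{n+1} x − T^n x + P_U T^n x = Prox_g(R_U T^n x) converges weakly to −v + P_U y(x); and g(Prox_g(R_U T^n x)) → min{g(u − v) : u ∈ U}. -/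

import Mathlib

open scoped RealInnerProductSpace Pointwise
open Filter Topology

noncomputable section

variable {X : Type*}

section Defs
variable [NormedAddCommGroup X] [InnerProductSpace ℝ X]

/-- `p` is the metric projection of `x` onto `S`: `p ∈ S` and
`⟪s − p, x − p⟫ ≤ 0` for all `s ∈ S`. -/
def IsMetricProj (S : Set X) (x p : X) : Prop :=
  p ∈ S ∧ ∀ s ∈ S, ⟪s - p, x - p⟫ ≤ (0 : ℝ)

/-- a function `X → (−∞,+∞]` is proper: never `−∞` and somewhere finite. -/
def EProper (g : X → EReal) : Prop :=
  (∀ x, g x ≠ ⊥) ∧ ∃ x, g x ≠ ⊤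

/-- convexity for extended-real-valued functions. -/
def EConvexOn (g : X → EReal) : Prop :=
  ∀ x y : X, ∀ a b : ℝ, 0 ≤ a → 0 ≤ b → a + b = 1 →
    g (a • x + b • y) ≤ (a : EReal) * g x + (b : EReal) * g y

/-- the convex subdifferential `∂g(x)`. -/
def ESubdiff (g : X → EReal) (x : X) : Set X :=
  {xs | ∀ z : X, g x + ((⟪z - x, xs⟫ : ℝ) : EReal) ≤ g z}

/-- the Fenchel conjugate `g*`. -/
def EConj (g : X → EReal) (xs : X) : EReal :=
  ⨆ x : X, ((⟪x, xs⟫ : ℝ) : EReal) - g x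

/-- `prox` is the proximal mapping of `g`: `prox x` minimizes
`y ↦ g y + ‖y − x‖²/2`. -/
def IsProx (g : X → EReal) (prox : X → X) : Prop :=
  ∀ x y : X,
    g (prox x) + ((‖prox x - x‖ ^ 2 / 2 : ℝ) : EReal) ≤
      g y + ((‖y - x‖ ^ 2 / 2 : ℝ) : EReal)

/-- the normal cone operator of a closed linear subspace:
`N_U(x) = U^⊥` if `x ∈ U`, and `∅` otherwise. -/
def normalCone (U : Submodule ℝ X) (x : X) : Set X :=
  {u | x ∈ U ∧ u ∈ Uᗮ}

/-- `c` is a weak cluster point of the sequence `s`, i.e. the weak limit of a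
subsequence of `s`. -/
def IsWeakClusterPt (s : ℕ → X) (c : X) : Prop :=
  ∃ φ : ℕ → ℕ, StrictMono φ ∧
    ∀ w : X, Tendsto (fun k => (⟪s (φ k), w⟫ : ℝ)) atTop (𝓝 ⟪c, w⟫)

end Defs

/-!
Write `P = P_U`, `R = R_U`, `sₙ = Tⁿ x` and `δₙ = v + sₙ₊₁ - sₙ`. Since `T` is firmly
nonexpansive and `v` is the minimal displacement vector (`⟪δₙ, v⟫ ≤ 0`), the shifted orbit
`n v + sₙ` is Fejér monotone with respect to every fixed point of `T (· + v)`, such as `y`.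
Hence `δₙ → 0` and `n v + sₙ` is bounded. Now `Prox_g (R sₙ) = P sₙ + δₙ - v`, and the
prox inequality at a point `z ∈ Z` squeezes `g (Prox_g (R sₙ))` between two sequences tending to
`g (z - v) = min_U g (· - v)`.

The fixed points of `T (· + v)` are the `w` with `P w - w ∈ ∂g (P w - v)`, so `P` maps them into
`Z`, and translating by the `Uᗮ`-component moves `Z` back into them. Therefore
`P_Z (P sₙ) = P (P_F (n v + sₙ)) → P y` strongly. A weak cluster point `c` of the bounded sequence
`P sₙ` lies in `U` and, by weak lower semicontinuity, satisfies `g (c - v) ≤ min`, so `c ∈ Z`;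
weak continuity of `P_Z` then forces `c = P_Z c = P y`.
-/

theorem EProper.coe_toReal {g : X → EReal} (hg : EProper g) {z : X} (hz : g z ≠ ⊤) :
    ((g z).toReal : EReal) = g z :=
  EReal.coe_toReal hz (hg.1 z)

theorem tendsto_zero_of_forall_add_le {a d : ℕ → ℝ} (ha : ∀ n, 0 ≤ a n) (hd : ∀ n, 0 ≤ d n)
    (h : ∀ n, a (n + 1) + d n ≤ a n) : Tendsto d atTop (𝓝 0) := by
  have hsum : ∀ n, ∑ k ∈ Finset.range n, d k + a n ≤ a 0 := by
    intro n
    induction n with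
    | zero => simp
    | succ n ih => rw [Finset.sum_range_succ]; linarith [h n]
  exact (summable_of_sum_range_le hd fun n =>
    (le_add_of_nonneg_right (ha n)).trans (hsum n)).tendsto_atTop_zero

section Normed

variable [NormedAddCommGroup X]

theorem IsProx.ne_top {g : X → EReal} {prox : X → X} (hprox : IsProx g prox) (hg : EProper g)
    (q : X) : g (prox q) ≠ ⊤ := by
  obtain ⟨x₀, hx₀⟩ := hg.2
  intro htop
  have h := hprox q x₀
  rw [htop, EReal.top_add_coe, top_le_iff, ← hg.coe_toReal hx₀, ← EReal.coe_add] at h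
  exact EReal.coe_ne_top _ h

def FirmlyNonexpansive (T : X → X) : Prop :=
  ∀ a b, ‖T a - T b‖ ^ 2 + ‖(a - T a) - (b - T b)‖ ^ 2 ≤ ‖a - b‖ ^ 2

theorem FirmlyNonexpansive.lipschitzWith {T : X → X} (hT : FirmlyNonexpansive T) :
    LipschitzWith 1 T :=
  LipschitzWith.of_dist_le_mul fun a b => by
    rw [NNReal.coe_one, one_mul, dist_eq_norm, dist_eq_norm]
    exact le_of_pow_le_pow_left₀ two_ne_zero (norm_nonneg _)
      (le_of_add_le_of_nonneg_left (hT a b) (sq_nonneg _))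

end Normed

section InnerProduct

variable [NormedAddCommGroup X] [InnerProductSpace ℝ X]

def WeakTendsto (s : ℕ → X) (a : X) : Prop :=
  ∀ w : X, Tendsto (fun n => ⟪s n, w⟫) atTop (𝓝 ⟪a, w⟫)

section WeakConvergence

theorem Filter.Tendsto.weakTendsto {s : ℕ → X} {a : X} (h : Tendsto s atTop (𝓝 a)) :
    WeakTendsto s a :=
  fun _ => h.inner tendsto_const_nhds

theorem WeakTendsto.add {s t : ℕ → X} {a b : X} (hs : WeakTendsto s a) (ht : WeakTendsto t b) :
    WeakTendsto (fun n => s n + t n) (a + b) := fun w => by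
  simpa only [inner_add_left] using (hs w).add (ht w)

theorem WeakTendsto.unique {s : ℕ → X} {a b : X} (ha : WeakTendsto s a) (hb : WeakTendsto s b) :
    a = b :=
  ext_inner_right ℝ fun w => tendsto_nhds_unique (ha w) (hb w)

theorem tendsto_inner_zero_of_norm_le {δ w : ℕ → X} (hδ : Tendsto δ atTop (𝓝 0)) {C : ℝ}
    (hw : ∀ n, ‖w n‖ ≤ C) : Tendsto (fun n => ⟪δ n, w n⟫) atTop (𝓝 0) := by
  refine squeeze_zero_norm (fun n => (norm_inner_le_norm _ _).trans
    (mul_le_mul_of_nonneg_left (hw n) (norm_nonneg _))) ?_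
  simpa using (tendsto_zero_iff_norm_tendsto_zero.mp hδ).mul_const C

theorem EConvexOn.convex_sublevel {g : X → EReal} (hconv : EConvexOn g) (t : EReal) :
    Convex ℝ {z | g z ≤ t} := by
  intro a ha b hb α β hα hβ hαβ
  calc g (α • a + β • b) ≤ (α : EReal) * g a + (β : EReal) * g b := hconv a b α β hα hβ hαβ
    _ ≤ (α : EReal) * t + (β : EReal) * t := by
      gcongr
      exacts [ha, hb]
    _ = t := by
      rw [← EReal.right_distrib_of_nonneg (by exact_mod_cast hα) (by exact_mod_cast hβ),
        ← EReal.coe_add, hαβ, EReal.coe_one, one_mul]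

variable [CompleteSpace X]

/-- Sequential Banach–Alaoglu in the separable closed span of the sequence, plus Riesz. -/
theorem exists_isWeakClusterPt_of_norm_le {u : ℕ → X} {C : ℝ} (hu : ∀ n, ‖u n‖ ≤ C) :
    ∃ c, IsWeakClusterPt u c := by
  set Y := (Submodule.span ℝ (Set.range u)).topologicalClosure
  have huY : ∀ n, u n ∈ Y := fun n =>
    Submodule.le_topologicalClosure _ (Submodule.subset_span ⟨n, rfl⟩)
  have : CompleteSpace Y := (Submodule.isClosed_topologicalClosure _).completeSpace_coe
  have : TopologicalSpace.SeparableSpace Y :=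
    (Set.countable_range u).isSeparable.span.closure.separableSpace
  have hball : ∀ n, StrongDual.toWeakDual (innerSL ℝ (⟨u n, huY n⟩ : Y)) ∈
      WeakDual.toStrongDual ⁻¹' Metric.closedBall (0 : StrongDual ℝ Y) C := fun n =>
    mem_closedBall_zero_iff.mpr ((innerSL_apply_norm ℝ (⟨u n, huY n⟩ : Y)).trans_le (hu n))
  obtain ⟨ℓ, -, φ, hφ, hlim⟩ := WeakDual.isSeqCompact_closedBall ℝ Y 0 C hball
  refine ⟨((InnerProductSpace.toDual ℝ Y).symm (WeakDual.toStrongDual ℓ) : X), φ, hφ, fun w => ?_⟩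
  convert ((WeakDual.eval_continuous (Y.orthogonalProjectionOnto w)).tendsto ℓ).comp hlim using 2
    with k
  · exact (Submodule.inner_orthogonalProjectionOnto_eq_of_mem_left ⟨u (φ k), huY _⟩ w).symm
  · rw [← Submodule.inner_orthogonalProjectionOnto_eq_of_mem_left,
      InnerProductSpace.toDual_symm_apply]
    rfl

theorem weakTendsto_of_forall_isWeakClusterPt {u : ℕ → X} {C : ℝ} (hu : ∀ n, ‖u n‖ ≤ C) {a : X}
    (h : ∀ c, IsWeakClusterPt u c → c = a) : WeakTendsto u a := by
  intro w
  by_contra hw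
  obtain ⟨ε, hε, hfar⟩ : ∃ ε > 0, ∃ᶠ n in atTop, ε ≤ dist ⟪u n, w⟫ ⟪a, w⟫ := by
    simpa [Metric.tendsto_nhds, Filter.not_eventually, Filter.frequently_atTop] using hw
  obtain ⟨φ, hφ, hφfar⟩ := extraction_of_frequently_atTop hfar
  obtain ⟨c, ψ, hψ, hc⟩ := exists_isWeakClusterPt_of_norm_le fun n => hu (φ n)
  obtain rfl := h c ⟨φ ∘ ψ, hφ.comp hψ, hc⟩
  obtain ⟨k, hk⟩ := ((Metric.tendsto_nhds.mp (hc w)) ε hε).exists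
  exact (hφfar (ψ k)).not_gt hk

theorem mem_of_weakTendsto_of_convex_of_isClosed {S : Set X} (hconv : Convex ℝ S)
    (hclosed : IsClosed S) {s : ℕ → X} {c : X} (hs : WeakTendsto s c)
    (hmem : ∀ᶠ n in atTop, s n ∈ S) : c ∈ S := by
  by_contra hc
  obtain ⟨f, r, hfc, hfS⟩ := geometric_hahn_banach_point_closed hconv hclosed hc
  have hf : Tendsto (fun n => f (s n)) atTop (𝓝 (f c)) := by
    convert hs ((InnerProductSpace.toDual ℝ X).symm f) using 2 <;>
      rw [real_inner_comm, InnerProductSpace.toDual_symm_apply]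
  exact hfc.not_ge (ge_of_tendsto hf (hmem.mono fun n hn => (hfS _ hn).le))

theorem EConvexOn.le_of_weakTendsto {g : X → EReal} (hconv : EConvexOn g)
    (hlsc : LowerSemicontinuous g) {s : ℕ → X} {c : X} (hs : WeakTendsto s c) {t : EReal}
    (hgs : Tendsto (fun n => g (s n)) atTop (𝓝 t)) : g c ≤ t := by
  refine EReal.le_of_forall_lt_iff_le.mp fun r hr => ?_
  exact mem_of_weakTendsto_of_convex_of_isClosed (hconv.convex_sublevel r)
    (hlsc.isClosed_preimage r) hs ((hgs.eventually (gt_mem_nhds hr)).mono fun n hn => hn.le)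

theorem weakTendsto_of_tendsto_comp {Z : Set X} {P : X → X} (hPZ : ∀ z ∈ Z, P z = z)
    (hPweak : ∀ s a, WeakTendsto s a → WeakTendsto (P ∘ s) (P a))
    {u : ℕ → X} {C : ℝ} (hu : ∀ n, ‖u n‖ ≤ C) (hclu : ∀ c, IsWeakClusterPt u c → c ∈ Z)
    {a : X} (hPu : Tendsto (P ∘ u) atTop (𝓝 a)) : WeakTendsto u a := by
  refine weakTendsto_of_forall_isWeakClusterPt hu fun c hc => ?_
  have ⟨φ, hφ, huφ⟩ := hc
  have hlim : WeakTendsto (P ∘ u ∘ φ) c := hPZ c (hclu c hc) ▸ hPweak _ _ huφ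
  exact hlim.unique (hPu.comp hφ.tendsto_atTop).weakTendsto

end WeakConvergence

section MetricProjection

variable {S : Set X} {x p : X}

theorem IsMetricProj.unique {q : X} (hp : IsMetricProj S x p) (hq : IsMetricProj S x q) :
    p = q := by
  have h := add_nonpos (hp.2 q hq.1) (hq.2 p hp.1)
  rw [← neg_sub p q, inner_neg_left, neg_add_eq_sub, ← inner_sub_right,
    sub_sub_sub_cancel_left, real_inner_self_nonpos] at h
  exact sub_eq_zero.mp h

theorem isMetricProj_self (hx : x ∈ S) : IsMetricProj S x x :=
  ⟨hx, fun s _ => by rw [sub_self, inner_zero_right]⟩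

theorem IsMetricProj.sq_norm_le_inner (hp : IsMetricProj S 0 p) {s : X} (hs : s ∈ S) :
    ‖p‖ ^ 2 ≤ ⟪s, p⟫ := by
  have h := hp.2 s hs
  rw [zero_sub, inner_neg_right, inner_sub_left, real_inner_self_eq_norm_sq] at h
  linarith

theorem IsMetricProj.starProjection {U : Submodule ℝ X} [U.HasOrthogonalProjection] {Z : Set X}
    (hp : IsMetricProj S x p) (hZU : Z ⊆ U) (hpZ : U.starProjection p ∈ Z)
    (hZS : ∀ z ∈ Z, z + (p - U.starProjection p) ∈ S) :
    IsMetricProj Z (U.starProjection x) (U.starProjection p) := by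
  refine ⟨hpZ, fun z hz => ?_⟩
  have hzU : z - U.starProjection p ∈ U := U.sub_mem (hZU hz) (hZU hpZ)
  have h := hp.2 _ (hZS z hz)
  rw [show z + (p - U.starProjection p) - p = z - U.starProjection p by abel] at h
  rwa [← map_sub, ← Submodule.inner_starProjection_left_eq_right,
    Submodule.starProjection_eq_self_iff.mpr hzU]

end MetricProjection

section Prox

variable {g : X → EReal} {prox : X → X}

theorem EProper.ne_top_of_mem_eSubdiff (hg : EProper g) {q b : X} (hb : b ∈ ESubdiff g q) :
    g q ≠ ⊤ := by
  obtain ⟨x₀, hx₀⟩ := hg.2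
  intro htop
  have h := hb x₀
  rw [htop, EReal.top_add_coe, top_le_iff] at h
  exact hx₀ h

theorem mem_eSubdiff_of_le_of_inner_eq_zero {p q b : X} (hb : b ∈ ESubdiff g p)
    (hle : g q ≤ g p) (horth : ⟪q - p, b⟫ = 0) : b ∈ ESubdiff g q := fun z =>
  calc g q + ((⟪z - q, b⟫ : ℝ) : EReal) ≤ g p + ((⟪z - p, b⟫ : ℝ) : EReal) := by
        rw [show z - p = (z - q) + (q - p) by abel, inner_add_left, horth, add_zero]
        gcongr
    _ ≤ g z := hb z

theorem isMinOn_of_mem_eSubdiff {U : Submodule ℝ X} {v z b : X} (hz : z ∈ U) (hb : b ∈ Uᗮ)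
    (hsub : b ∈ ESubdiff g (z - v)) : IsMinOn (fun u => g (u - v)) U z := by
  refine isMinOn_iff.mpr fun u hu => ?_
  have h := hsub (u - v)
  rwa [sub_sub_sub_cancel_right, Submodule.inner_right_of_mem_orthogonal (U.sub_mem hu hz) hb,
    EReal.coe_zero, add_zero] at h

namespace IsProx

/-- Compare `prox q` with the convex combination `(1 - t) • prox q + t • z`. -/
theorem toReal_add_inner_le_add (hprox : IsProx g prox) (hg : EProper g) (hconv : EConvexOn g)
    (q : X) {z : X} (hz : g z ≠ ⊤) {t : ℝ} (ht₀ : 0 < t) (ht₁ : t ≤ 1) :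
    (g (prox q)).toReal + ⟪z - prox q, q - prox q⟫ ≤
      (g z).toReal + t * (‖z - prox q‖ ^ 2 / 2) := by
  set p := prox q
  set y := (1 - t) • p + t • z
  have hy : ‖y - q‖ ^ 2 = ‖p - q‖ ^ 2 + 2 * (t * ⟪p - q, z - p⟫) + t ^ 2 * ‖z - p‖ ^ 2 := by
    rw [show y - q = (p - q) + t • (z - p) by module, norm_add_sq_real, real_inner_smul_right,
      norm_smul, Real.norm_eq_abs, mul_pow, sq_abs]
  have hgy : g y ≤ (((1 - t) * (g p).toReal + t * (g z).toReal : ℝ) : EReal) := by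
    have h := hconv p z (1 - t) t (by linarith) ht₀.le (by ring)
    rwa [← hg.coe_toReal (hprox.ne_top hg q), ← hg.coe_toReal hz, ← EReal.coe_mul,
      ← EReal.coe_mul, ← EReal.coe_add] at h
  have hmin : (g p).toReal + ‖p - q‖ ^ 2 / 2 ≤
      (1 - t) * (g p).toReal + t * (g z).toReal + ‖y - q‖ ^ 2 / 2 := by
    have h := (hprox q y).trans (add_le_add_left hgy _)
    rwa [← hg.coe_toReal (hprox.ne_top hg q), ← EReal.coe_add, ← EReal.coe_add,
      EReal.coe_le_coe_iff] at h
  have hip : ⟪z - p, q - p⟫ = -⟪p - q, z - p⟫ := by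
    rw [real_inner_comm, ← inner_neg_left, neg_sub]
  rw [hip]
  nlinarith

theorem toReal_add_inner_le (hprox : IsProx g prox) (hg : EProper g) (hconv : EConvexOn g)
    (q : X) {z : X} (hz : g z ≠ ⊤) :
    (g (prox q)).toReal + ⟪z - prox q, q - prox q⟫ ≤ (g z).toReal := by
  have hlim : Tendsto (fun t : ℝ => (g z).toReal + t * (‖z - prox q‖ ^ 2 / 2)) (𝓝[>] 0)
      (𝓝 (g z).toReal) := by
    have h : Tendsto (fun t : ℝ => t * (‖z - prox q‖ ^ 2 / 2)) (𝓝 0) (𝓝 0) :=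
      (continuous_id.mul continuous_const).tendsto' 0 0 (zero_mul _)
    simpa using (tendsto_const_nhds.add h).mono_left nhdsWithin_le_nhds
  refine ge_of_tendsto hlim ?_
  filter_upwards [Ioc_mem_nhdsGT one_pos] with t ht
  exact hprox.toReal_add_inner_le_add hg hconv q hz ht.1 ht.2

theorem sub_mem_eSubdiff (hprox : IsProx g prox) (hg : EProper g) (hconv : EConvexOn g)
    (q : X) : q - prox q ∈ ESubdiff g (prox q) := fun z => by
  by_cases hz : g z = ⊤
  · rw [hz]; exact le_top
  · rw [← hg.coe_toReal (hprox.ne_top hg q), ← hg.coe_toReal hz, ← EReal.coe_add,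
      EReal.coe_le_coe_iff]
    exact hprox.toReal_add_inner_le hg hconv q hz

theorem norm_sub_sq_le_inner (hprox : IsProx g prox) (hg : EProper g) (hconv : EConvexOn g)
    (q₁ q₂ : X) : ‖prox q₁ - prox q₂‖ ^ 2 ≤ ⟪prox q₁ - prox q₂, q₁ - q₂⟫ := by
  have h₁ := hprox.toReal_add_inner_le hg hconv q₁ (hprox.ne_top hg q₂)
  have h₂ := hprox.toReal_add_inner_le hg hconv q₂ (hprox.ne_top hg q₁)
  rw [← neg_sub (prox q₁) (prox q₂), inner_neg_left] at h₁
  have h : ⟪prox q₁ - prox q₂, (prox q₁ - prox q₂) - (q₁ - q₂)⟫ ≤ 0 := by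
    rw [show (prox q₁ - prox q₂) - (q₁ - q₂) = (q₂ - prox q₂) - (q₁ - prox q₁) by abel,
      inner_sub_right]
    linarith
  rw [inner_sub_right, real_inner_self_eq_norm_sq] at h
  linarith

theorem norm_reflect_sub_le (hprox : IsProx g prox) (hg : EProper g) (hconv : EConvexOn g)
    (q₁ q₂ : X) : ‖(2 • prox q₁ - q₁) - (2 • prox q₂ - q₂)‖ ≤ ‖q₁ - q₂‖ := by
  refine le_of_pow_le_pow_left₀ two_ne_zero (norm_nonneg _) ?_
  rw [show (2 • prox q₁ - q₁) - (2 • prox q₂ - q₂) = (2 : ℝ) • (prox q₁ - prox q₂) - (q₁ - q₂)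
    by module, norm_sub_sq_real, real_inner_smul_left, norm_smul, Real.norm_two, mul_pow]
  nlinarith [hprox.norm_sub_sq_le_inner hg hconv q₁ q₂]

theorem apply_add_eq_of_mem_eSubdiff (hprox : IsProx g prox) (hg : EProper g)
    (hconv : EConvexOn g) {q b : X} (hb : b ∈ ESubdiff g q) : prox (q + b) = q := by
  have hq := hg.ne_top_of_mem_eSubdiff hb
  have h₁ := hprox.toReal_add_inner_le hg hconv (q + b) hq
  have h₂ := hb (prox (q + b))
  rw [← hg.coe_toReal hq, ← hg.coe_toReal (hprox.ne_top hg (q + b)), ← EReal.coe_add,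
    EReal.coe_le_coe_iff, ← neg_sub q, inner_neg_left] at h₂
  set p := prox (q + b)
  have h : ⟪q - p, q - p⟫ ≤ 0 := by
    rw [show q + b - p = (q - p) + b by abel, inner_add_right] at h₁
    linarith
  exact (sub_eq_zero.mp (real_inner_self_nonpos.mp h)).symm

end IsProx

end Prox

section FirmlyNonexpansive

variable {T : X → X}

theorem firmlyNonexpansive_of_norm_reflect_le
    (h : ∀ a b, ‖(2 • T a - a) - (2 • T b - b)‖ ≤ ‖a - b‖) : FirmlyNonexpansive T := by
  intro a b
  have hpar := parallelogram_law_with_norm ℝ (a - b) ((2 • T a - a) - (2 • T b - b))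
  rw [show (a - b) + ((2 • T a - a) - (2 • T b - b)) = (2 : ℝ) • (T a - T b) by module,
    show (a - b) - ((2 • T a - a) - (2 • T b - b)) = (2 : ℝ) • ((a - T a) - (b - T b)) by module,
    norm_smul, norm_smul, Real.norm_two] at hpar
  nlinarith [h a b, norm_nonneg ((2 • T a - a) - (2 • T b - b)), norm_nonneg (a - b)]

variable {v z : X}

theorem inner_add_sub_nonpos_of_sq_norm_le (hv : ∀ s, ‖v‖ ^ 2 ≤ ⟪s - T s, v⟫) (s : X) :
    ⟪v + T s - s, v⟫ ≤ 0 := by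
  rw [show v + T s - s = v - (s - T s) by abel, inner_sub_left, real_inner_self_eq_norm_sq]
  linarith [hv s]

/-- Firm nonexpansiveness at `s` and `z + v`; the cross terms in `t` are controlled by
`⟪v + T s - s, v⟫ ≤ 0`. -/
theorem FirmlyNonexpansive.sq_norm_shift_step_le (hT : FirmlyNonexpansive T)
    (hv : ∀ s, ‖v‖ ^ 2 ≤ ⟪s - T s, v⟫) (hz : z = T (z + v)) (s : X) {t : ℝ} (ht : 0 ≤ t) :
    ‖(t + 1) • v + T s - z‖ ^ 2 + ‖v + T s - s‖ ^ 2 ≤ ‖t • v + s - z‖ ^ 2 := by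
  have hfirm := hT s (z + v)
  rw [← hz, show (s - T s) - (z + v - z) = -(v + T s - s) by abel, norm_neg,
    show s - (z + v) = (s - z) - v by abel, norm_sub_sq_real (s - z) v] at hfirm
  have hδ : ⟪v + T s - s, v⟫ = ‖v‖ ^ 2 + ⟪T s - z, v⟫ - ⟪s - z, v⟫ := by
    rw [show v + T s - s = v + (T s - z) - (s - z) by abel, inner_sub_left, inner_add_left,
      real_inner_self_eq_norm_sq]
  rw [show (t + 1) • v + T s - z = (T s - z) + (t + 1) • v by abel,
    show t • v + s - z = (s - z) + t • v by abel, norm_add_sq_real, norm_add_sq_real,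
    inner_smul_right, inner_smul_right, norm_smul, norm_smul, Real.norm_eq_abs,
    Real.norm_eq_abs, abs_of_nonneg ht, abs_of_nonneg (by linarith : 0 ≤ t + 1), mul_pow, mul_pow]
  nlinarith [mul_nonpos_of_nonneg_of_nonpos (by linarith : 0 ≤ t + 1)
    (inner_add_sub_nonpos_of_sq_norm_le hv s)]

theorem FirmlyNonexpansive.sq_norm_shifted_iterate_succ_le (hT : FirmlyNonexpansive T)
    (hv : ∀ s, ‖v‖ ^ 2 ≤ ⟪s - T s, v⟫) (hz : z = T (z + v)) (x : X) (n : ℕ) :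
    ‖((n + 1 : ℕ) : ℝ) • v + T^[n + 1] x - z‖ ^ 2 + ‖v + T (T^[n] x) - T^[n] x‖ ^ 2 ≤
      ‖(n : ℝ) • v + T^[n] x - z‖ ^ 2 := by
  rw [Nat.cast_succ, Function.iterate_succ_apply']
  exact hT.sq_norm_shift_step_le hv hz (T^[n] x) n.cast_nonneg

theorem FirmlyNonexpansive.norm_shifted_iterate_sub_le (hT : FirmlyNonexpansive T)
    (hv : ∀ s, ‖v‖ ^ 2 ≤ ⟪s - T s, v⟫) (hz : z = T (z + v)) (x : X) (n : ℕ) :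
    ‖(n : ℝ) • v + T^[n] x - z‖ ≤ ‖x - z‖ := by
  induction n with
  | zero => simp
  | succ n ih =>
    refine (le_of_pow_le_pow_left₀ two_ne_zero (norm_nonneg _) ?_).trans ih
    exact le_of_add_le_of_nonneg_left (hT.sq_norm_shifted_iterate_succ_le hv hz x n)
      (sq_nonneg _)

theorem FirmlyNonexpansive.tendsto_shifted_iterate_sub (hT : FirmlyNonexpansive T)
    (hv : ∀ s, ‖v‖ ^ 2 ≤ ⟪s - T s, v⟫) (hz : z = T (z + v)) (x : X) :
    Tendsto (fun n : ℕ => v + T (T^[n] x) - T^[n] x) atTop (𝓝 0) := by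
  have h := tendsto_zero_of_forall_add_le (a := fun n : ℕ => ‖(n : ℝ) • v + T^[n] x - z‖ ^ 2)
    (fun n => sq_nonneg _) (fun n => sq_nonneg _) (hT.sq_norm_shifted_iterate_succ_le hv hz x)
  refine tendsto_zero_iff_norm_tendsto_zero.mpr ?_
  simpa only [Real.sqrt_sq (norm_nonneg _), Real.sqrt_zero] using h.sqrt

end FirmlyNonexpansive

section DouglasRachford

variable {U : Submodule ℝ X} [U.HasOrthogonalProjection] {g : X → EReal} {prox : X → X} {v : X}

def drOperator (U : Submodule ℝ X) [U.HasOrthogonalProjection] (prox : X → X) (z : X) : X :=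
  z - U.starProjection z + prox (U.reflection z)

theorem starProjection_sub_mem_orthogonal (w : X) : U.starProjection w - w ∈ Uᗮ := by
  simpa using Uᗮ.neg_mem (U.sub_starProjection_mem_orthogonal w)

theorem starProjection_smul_add_of_mem_orthogonal (hv : v ∈ Uᗮ) (t : ℝ) (s : X) :
    U.starProjection (t • v + s) = U.starProjection s := by
  rw [map_add, map_smul, U.starProjection_apply_eq_zero_iff.mpr hv, smul_zero, zero_add]

theorem drOperator_sub_add_starProjection (z : X) :
    drOperator U prox z - z + U.starProjection z = prox (U.reflection z) := by
  rw [drOperator]; abel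

theorem prox_reflection_eq (s : X) :
    prox (U.reflection s) = U.starProjection s + ((v + drOperator U prox s - s) - v) := by
  rw [← drOperator_sub_add_starProjection (U := U) (prox := prox)]; abel

theorem two_smul_drOperator_sub (z : X) :
    2 • drOperator U prox z - z = 2 • prox (U.reflection z) - U.reflection z := by
  rw [drOperator, Submodule.reflection_apply]; module

theorem firmlyNonexpansive_drOperator (hprox : IsProx g prox) (hg : EProper g)
    (hconv : EConvexOn g) : FirmlyNonexpansive (drOperator U prox) := by
  refine firmlyNonexpansive_of_norm_reflect_le fun a b => ?_
  rw [two_smul_drOperator_sub, two_smul_drOperator_sub, ← U.reflection.norm_map (a - b),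
    map_sub]
  exact hprox.norm_reflect_sub_le hg hconv _ _

theorem drOperator_shift_fixed_iff (hprox : IsProx g prox) (hg : EProper g)
    (hconv : EConvexOn g) (hv : v ∈ Uᗮ) (w : X) :
    w = drOperator U prox (w + v) ↔
      U.starProjection w - w ∈ ESubdiff g (U.starProjection w - v) := by
  have hT : drOperator U prox (w + v) = w + v - U.starProjection w +
      prox ((U.starProjection w - v) + (U.starProjection w - w)) := by
    rw [drOperator, Submodule.reflection_apply, map_add,
      U.starProjection_apply_eq_zero_iff.mpr hv, add_zero]
    congr 2
    module
  rw [hT]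
  constructor
  · intro h
    have hfix : prox ((U.starProjection w - v) + (U.starProjection w - w)) =
        U.starProjection w - v := by
      rw [← sub_eq_iff_eq_add'.mpr h]
      abel
    have := hprox.sub_mem_eSubdiff hg hconv ((U.starProjection w - v) + (U.starProjection w - w))
    rwa [hfix, add_sub_cancel_left] at this
  · intro h
    rw [hprox.apply_add_eq_of_mem_eSubdiff hg hconv h]
    abel

theorem drOperator_shift_fixed_translate (hprox : IsProx g prox) (hg : EProper g)
    (hconv : EConvexOn g) (hv : v ∈ Uᗮ) {w z : X} (hw : w = drOperator U prox (w + v))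
    (hz : z ∈ U) (hle : g (z - v) ≤ g (U.starProjection w - v)) :
    z + (w - U.starProjection w) = drOperator U prox (z + (w - U.starProjection w) + v) := by
  have hPz : U.starProjection (z + (w - U.starProjection w)) = z := by
    rw [map_add, U.starProjection_eq_self_iff.mpr hz,
      U.starProjection_apply_eq_zero_iff.mpr (U.sub_starProjection_mem_orthogonal w), add_zero]
  rw [drOperator_shift_fixed_iff hprox hg hconv hv, hPz,
    show z - (z + (w - U.starProjection w)) = U.starProjection w - w by abel]
  refine mem_eSubdiff_of_le_of_inner_eq_zero
    ((drOperator_shift_fixed_iff hprox hg hconv hv w).mp hw) hle ?_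
  rw [sub_sub_sub_cancel_right]
  exact Submodule.inner_right_of_mem_orthogonal (U.sub_mem hz (U.starProjection_apply_mem w))
    (starProjection_sub_mem_orthogonal w)

theorem isMetricProj_starProjection_of_shift_fixed (hprox : IsProx g prox) (hg : EProper g)
    (hconv : EConvexOn g) (hv : v ∈ Uᗮ) {a w : X}
    (hw : IsMetricProj {z | z = drOperator U prox (z + v)} a w) :
    IsMetricProj {z | z ∈ U ∧ ∃ b ∈ Uᗮ, b ∈ ESubdiff g (z - v)}
      (U.starProjection a) (U.starProjection w) := by
  refine hw.starProjection (fun z hz => hz.1) ⟨U.starProjection_apply_mem w, _,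
    starProjection_sub_mem_orthogonal w, (drOperator_shift_fixed_iff hprox hg hconv hv w).mp hw.1⟩
    fun z ⟨hz, b, hb, hsub⟩ => drOperator_shift_fixed_translate hprox hg hconv hv hw.1 hz ?_
  exact isMinOn_iff.mp (isMinOn_of_mem_eSubdiff hz hb hsub) _ (U.starProjection_apply_mem w)

/-- The prox inequality of `prox (R s)` tested at `z - v`. -/
theorem drOperator_value_le (hprox : IsProx g prox) (hg : EProper g) (hconv : EConvexOn g)
    (hv : v ∈ Uᗮ) {z : X} (hz : z ∈ U) (hfin : g (z - v) ≠ ⊤) (s : X) :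
    (g (prox (U.reflection s))).toReal ≤
      (g (z - v)).toReal + ⟪v + drOperator U prox s - s, z + v - s⟫ := by
  have key := hprox.toReal_add_inner_le hg hconv (U.reflection s) hfin
  have hp := drOperator_sub_add_starProjection (U := U) (prox := prox) s
  rw [show z - v - prox (U.reflection s) =
      (z - U.starProjection s) - (v + drOperator U prox s - s) by rw [← hp]; abel,
    show U.reflection s - prox (U.reflection s) =
      (U.starProjection s - s) + v - (v + drOperator U prox s - s) by
      rw [← hp, Submodule.reflection_apply]; abel] at key
  rw [show z + v - s = (z - U.starProjection s) + (U.starProjection s - s) + v by abel]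
  have haU : z - U.starProjection s ∈ U := U.sub_mem hz (U.starProjection_apply_mem s)
  have hac := Submodule.inner_right_of_mem_orthogonal haU (starProjection_sub_mem_orthogonal s)
  have hav := Submodule.inner_right_of_mem_orthogonal haU hv
  set δ := v + drOperator U prox s - s
  set a := z - U.starProjection s
  set c := U.starProjection s - s
  simp only [inner_sub_left, inner_sub_right, inner_add_right] at key ⊢
  nlinarith [real_inner_self_nonneg (x := δ) (F := X), real_inner_comm a δ]

/-- The subgradient inequality of `b` at `z - v` tested at `prox (R s)`. -/
theorem drOperator_value_ge (hprox : IsProx g prox) (hg : EProper g) {z b : X} (hz : z ∈ U)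
    (hb : b ∈ Uᗮ) (hsub : b ∈ ESubdiff g (z - v)) (s : X) :
    (g (z - v)).toReal + ⟪v + drOperator U prox s - s, b⟫ ≤
      (g (prox (U.reflection s))).toReal := by
  have h := hsub (prox (U.reflection s))
  rw [← hg.coe_toReal (hg.ne_top_of_mem_eSubdiff hsub), ← hg.coe_toReal (hprox.ne_top hg _),
    ← EReal.coe_add, EReal.coe_le_coe_iff,
    show prox (U.reflection s) - (z - v) =
      (v + drOperator U prox s - s) - (z - U.starProjection s) by
      rw [prox_reflection_eq (U := U) (prox := prox) (v := v)]; abel, inner_sub_left,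
    Submodule.inner_right_of_mem_orthogonal (U.sub_mem hz (U.starProjection_apply_mem s)) hb,
    sub_zero] at h
  exact h

theorem weakTendsto_prox_reflection {s : ℕ → X} {c : X}
    (hδ : Tendsto (fun n => v + drOperator U prox (s n) - s n) atTop (𝓝 0))
    (hs : WeakTendsto (fun n => U.starProjection (s n)) c) :
    WeakTendsto (fun n => prox (U.reflection (s n))) (c - v) := by
  convert hs.add (hδ.sub (tendsto_const_nhds (x := v))).weakTendsto using 1
  · exact funext fun n => prox_reflection_eq (s n)
  · abel

theorem norm_starProjection_iterate_le (hprox : IsProx g prox) (hg : EProper g)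
    (hconv : EConvexOn g) (hv : v ∈ Uᗮ) (hdisp : ∀ s, ‖v‖ ^ 2 ≤ ⟪s - drOperator U prox s, v⟫)
    {y : X} (hy : y = drOperator U prox (y + v)) (x : X) (n : ℕ) :
    ‖U.starProjection ((drOperator U prox)^[n] x)‖ ≤ ‖y‖ + ‖x - y‖ := by
  rw [← starProjection_smul_add_of_mem_orthogonal hv n]
  refine (U.norm_starProjection_apply_le _).trans ((norm_le_norm_add_norm_sub' _ y).trans ?_)
  exact add_le_add le_rfl
    ((firmlyNonexpansive_drOperator hprox hg hconv).norm_shifted_iterate_sub_le hdisp hy x n)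

/-- Squeeze between `drOperator_value_ge` and `drOperator_value_le`; in the upper bound the
unbounded part `(n + 1) ⟪δₙ, v⟫` of `⟪δₙ, z + v - sₙ⟫` is nonpositive. -/
theorem tendsto_drOperator_value (hprox : IsProx g prox) (hg : EProper g) (hconv : EConvexOn g)
    (hv : v ∈ Uᗮ) (hdisp : ∀ s, ‖v‖ ^ 2 ≤ ⟪s - drOperator U prox s, v⟫) {y : X}
    (hy : y = drOperator U prox (y + v)) {z b : X} (hz : z ∈ U) (hb : b ∈ Uᗮ)
    (hsub : b ∈ ESubdiff g (z - v)) (x : X) :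
    Tendsto (fun n : ℕ => g (prox (U.reflection ((drOperator U prox)^[n] x)))) atTop
      (𝓝 (g (z - v))) := by
  set T := drOperator U prox
  have hT := firmlyNonexpansive_drOperator hprox hg hconv (U := U)
  have hδ := hT.tendsto_shifted_iterate_sub hdisp hy x
  have hfin := hg.ne_top_of_mem_eSubdiff hsub
  have hbdd : ∀ n : ℕ, ‖z - ((n : ℝ) • v + T^[n] x)‖ ≤ ‖z - y‖ + ‖x - y‖ := fun n =>
    (norm_sub_le_norm_sub_add_norm_sub _ y _).trans (add_le_add le_rfl
      ((norm_sub_rev _ _).trans_le (hT.norm_shifted_iterate_sub_le hdisp hy x n)))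
  have hupper : ∀ n : ℕ, (g (prox (U.reflection (T^[n] x)))).toReal ≤
      (g (z - v)).toReal + ⟪v + T (T^[n] x) - T^[n] x, z - ((n : ℝ) • v + T^[n] x)⟫ := by
    intro n
    have h := drOperator_value_le hprox hg hconv hv hz hfin (T^[n] x)
    rw [show z + v - T^[n] x = (z - ((n : ℝ) • v + T^[n] x)) + ((n : ℝ) + 1) • v by module,
      inner_add_right, real_inner_smul_right] at h
    nlinarith [inner_add_sub_nonpos_of_sq_norm_le hdisp (T^[n] x)]
  rw [← hg.coe_toReal hfin]
  refine (EReal.tendsto_coe.mpr ?_).congr fun n => hg.coe_toReal (hprox.ne_top hg _)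
  refine tendsto_of_tendsto_of_tendsto_of_le_of_le ?_ ?_
    (fun n => drOperator_value_ge hprox hg hz hb hsub (T^[n] x)) hupper
  · simpa using tendsto_const_nhds.add (hδ.inner (𝕜 := ℝ) (tendsto_const_nhds (x := b)))
  · simpa using tendsto_const_nhds.add (tendsto_inner_zero_of_norm_le hδ hbdd)

theorem tendsto_metricProj_starProjection_iterate (hprox : IsProx g prox) (hg : EProper g)
    (hconv : EConvexOn g) (hv : v ∈ Uᗮ) {PZ PF : X → X}
    (hPZ : ∀ w, IsMetricProj {z | z ∈ U ∧ ∃ b ∈ Uᗮ, b ∈ ESubdiff g (z - v)} w (PZ w))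
    (hPF : ∀ w, IsMetricProj {z | z = drOperator U prox (z + v)} w (PF w)) {x y : X}
    (hy : Tendsto (fun n : ℕ => PF ((n : ℝ) • v + (drOperator U prox)^[n] x)) atTop (𝓝 y)) :
    Tendsto (fun n => PZ (U.starProjection ((drOperator U prox)^[n] x))) atTop
      (𝓝 (U.starProjection y)) := by
  have hPZ_eq : ∀ n : ℕ, PZ (U.starProjection ((drOperator U prox)^[n] x)) =
      U.starProjection (PF ((n : ℝ) • v + (drOperator U prox)^[n] x)) := fun n =>
    (hPZ _).unique (starProjection_smul_add_of_mem_orthogonal hv n _ ▸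
      isMetricProj_starProjection_of_shift_fixed hprox hg hconv hv (hPF _))
  simpa only [hPZ_eq, Function.comp_def] using (U.starProjection.continuous.tendsto y).comp hy

theorem mem_of_isWeakClusterPt_starProjection_iterate [CompleteSpace X]
    (hprox : IsProx g prox) (hg : EProper g) (hconv : EConvexOn g)
    (hlsc : LowerSemicontinuous g) (hv : v ∈ Uᗮ)
    (hdisp : ∀ s, ‖v‖ ^ 2 ≤ ⟪s - drOperator U prox s, v⟫) {y : X}
    (hy : y = drOperator U prox (y + v)) {z b : X} (hz : z ∈ U) (hb : b ∈ Uᗮ)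
    (hsub : b ∈ ESubdiff g (z - v)) {x c : X}
    (hc : IsWeakClusterPt (fun n => U.starProjection ((drOperator U prox)^[n] x)) c) :
    c ∈ U ∧ ∃ b ∈ Uᗮ, b ∈ ESubdiff g (c - v) := by
  obtain ⟨φ, hφ, hcφ⟩ := hc
  have hcU : c ∈ U := mem_of_weakTendsto_of_convex_of_isClosed U.convex
    (U.orthogonal_orthogonal ▸ Uᗮ.isClosed_orthogonal) hcφ
    (.of_forall fun k => U.starProjection_apply_mem _)
  have hδ := ((firmlyNonexpansive_drOperator hprox hg hconv).tendsto_shifted_iterate_sub hdisp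
    hy x).comp hφ.tendsto_atTop
  have hle := hconv.le_of_weakTendsto hlsc (weakTendsto_prox_reflection hδ hcφ)
    ((tendsto_drOperator_value hprox hg hconv hv hdisp hy hz hb hsub x).comp hφ.tendsto_atTop)
  refine ⟨hcU, b, hb, mem_eSubdiff_of_le_of_inner_eq_zero hsub hle ?_⟩
  rw [sub_sub_sub_cancel_right]
  exact Submodule.inner_right_of_mem_orthogonal (U.sub_mem hcU hz) hb

end DouglasRachford

theorem exists_normalCone_add_eSubdiff_iff {U : Submodule ℝ X} {g : X → EReal} {v z : X}
    (hv : v ∈ Uᗮ) :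
    (∃ a b : X, a ∈ normalCone U z ∧ b ∈ ESubdiff g (z - v) ∧ v = a + b) ↔
      z ∈ U ∧ ∃ b ∈ Uᗮ, b ∈ ESubdiff g (z - v) := by
  constructor
  · rintro ⟨a, b, ⟨hz, ha⟩, hb, rfl⟩
    exact ⟨hz, b, by simpa using Uᗮ.sub_mem hv ha, hb⟩
  · rintro ⟨hz, b, hb, hsub⟩
    exact ⟨v - b, b, ⟨hz, Uᗮ.sub_mem hv hb⟩, hsub, by abel⟩

end InnerProduct

theorem DR_main_result_general
    [NormedAddCommGroup X] [InnerProductSpace ℝ X] [CompleteSpace X]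
    (U : Submodule ℝ X) [U.HasOrthogonalProjection]
    (g : X → EReal) (hgproper : EProper g) (hglsc : LowerSemicontinuous g)
    (hgconv : EConvexOn g)
    (prox : X → X) (hprox : IsProx g prox)
    (PU RU T : X → X)
    (hPU : ∀ z, PU z = (U.orthogonalProjectionOnto z : X))
    (hRU : ∀ z, RU z = 2 • PU z - z)
    (hT : ∀ z, T z = z - PU z + prox (RU z))
    (v : X)
    (hv : IsMetricProj (closure (Set.range fun z => z - T z)) 0 v)
    (hvU : v ∈ Uᗮ)
    (Z : Set X)
    (hZ : Z = {z | ∃ a b : X, a ∈ normalCone U z ∧ b ∈ ESubdiff g (z - v) ∧ v = a + b})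
    (hZne : Z.Nonempty)
    (PZ : X → X) (hPZ : ∀ w : X, IsMetricProj Z w (PZ w))
    (hPZweak : ∀ (s : ℕ → X) (a : X),
      (∀ w : X, Tendsto (fun n => (⟪s n, w⟫ : ℝ)) atTop (𝓝 ⟪a, w⟫)) →
      ∀ w : X, Tendsto (fun n => (⟪PZ (s n), w⟫ : ℝ)) atTop (𝓝 ⟪PZ a, w⟫))
    (F : Set X) (hF : F = {z | z = T (z + v)})
    (PF : X → X) (hPF : ∀ w : X, IsMetricProj F w (PF w))
    (x y : X)
    (hy : Tendsto (fun n : ℕ => PF ((n : ℝ) • v + T^[n] x)) atTop (𝓝 y)) :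
    -- the shadow sequence converges weakly to `P_U y`, a minimizer of `g(·−v)` over `U`
    (∀ w : X, Tendsto (fun n : ℕ => (⟪PU (T^[n] x), w⟫ : ℝ)) atTop (𝓝 ⟪PU y, w⟫)) ∧
    PU y ∈ U ∧ (∀ u ∈ U, g (PU y - v) ≤ g (u - v)) ∧
    -- identity and weak convergence of `Prox_g (R_U Tⁿ x)`
    (∀ n : ℕ, T^[n+1] x - T^[n] x + PU (T^[n] x) = prox (RU (T^[n] x))) ∧
    (∀ w : X, Tendsto (fun n : ℕ => (⟪prox (RU (T^[n] x)), w⟫ : ℝ)) atTop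
      (𝓝 ⟪-v + PU y, w⟫)) ∧
    -- the function values converge to the minimum
    Tendsto (fun n : ℕ => g (prox (RU (T^[n] x)))) atTop
      (𝓝 (⨅ u : U, g ((u : X) - v))) := by
  obtain rfl : PU = U.starProjection :=
    funext fun z => (hPU z).trans (U.starProjection_apply z).symm
  obtain rfl : RU = U.reflection := funext hRU
  obtain rfl : T = drOperator U prox := funext hT
  obtain rfl : Z = {z | z ∈ U ∧ ∃ b ∈ Uᗮ, b ∈ ESubdiff g (z - v)} :=
    hZ.trans (Set.ext fun z => exists_normalCone_add_eSubdiff_iff hvU)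
  subst hF
  have hfirm := firmlyNonexpansive_drOperator hprox hgproper hgconv (U := U)
  have hdisp : ∀ s, ‖v‖ ^ 2 ≤ ⟪s - drOperator U prox s, v⟫ := fun s =>
    hv.sq_norm_le_inner (subset_closure ⟨s, rfl⟩)
  have hyF : y = drOperator U prox (y + v) := (isClosed_eq continuous_id
    (hfirm.lipschitzWith.continuous.comp (continuous_add_const v))).mem_of_tendsto hy
    (.of_forall fun n => (hPF _).1)
  obtain ⟨z, hzU, b, hb, hsub⟩ := hZne
  have hshadow : WeakTendsto (fun n => U.starProjection ((drOperator U prox)^[n] x))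
      (U.starProjection y) :=
    weakTendsto_of_tendsto_comp (fun z hz => (hPZ z).unique (isMetricProj_self hz)) hPZweak
      (norm_starProjection_iterate_le hprox hgproper hgconv hvU hdisp hyF x)
      (fun c hc => mem_of_isWeakClusterPt_starProjection_iterate hprox hgproper hgconv hglsc hvU
        hdisp hyF hzU hb hsub hc)
      (tendsto_metricProj_starProjection_iterate hprox hgproper hgconv hvU hPZ hPF hy)
  have hPyZ := (drOperator_shift_fixed_iff hprox hgproper hgconv hvU y).mp hyF
  refine ⟨hshadow, U.starProjection_apply_mem y, fun u hu => ?_, fun n => ?_, ?_, ?_⟩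
  · exact isMinOn_iff.mp (isMinOn_of_mem_eSubdiff (U.starProjection_apply_mem y)
      (starProjection_sub_mem_orthogonal y) hPyZ) u hu
  · rw [Function.iterate_succ_apply']
    exact drOperator_sub_add_starProjection _
  · rw [neg_add_eq_sub]
    exact weakTendsto_prox_reflection (hfirm.tendsto_shifted_iterate_sub hdisp hyF x) hshadow
  · convert tendsto_drOperator_value hprox hgproper hgconv hvU hdisp hyF hzU hb hsub x using 2
    exact (isMinOn_of_mem_eSubdiff hzU hb hsub).iInf_eq hzU

/-- **main result.** Under the standing assumptions
(`v = P_{closure(U − dom g)} 0 = P_{closure(ran(Id−T))} 0 ∈ U^⊥`,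
`0 ∈ U^⊥ + dom g*`, `Z ≠ ∅`, `P_Z` weak-to-weak continuous), with
`y(x) = lim_n P_F(nv + Tⁿx)`:
the shadow sequence `P_U Tⁿx` converges weakly to `P_U y(x)`, which minimizes
`g(· − v)` over `U`; `Tⁿ⁺¹x − Tⁿx + P_U Tⁿx = Prox_g(R_U Tⁿx)` converges weakly
to `−v + P_U y(x)`; and `g(Prox_g(R_U Tⁿx)) → min (ι_U + g(· − v))`. -/
theorem DR_main_result
    [NormedAddCommGroup X] [InnerProductSpace ℝ X] [CompleteSpace X]
    (U : Submodule ℝ X) (hUclosed : IsClosed (U : Set X)) [U.HasOrthogonalProjection]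
    (g : X → EReal) (hgproper : EProper g) (hglsc : LowerSemicontinuous g)
    (hgconv : EConvexOn g)
    (prox : X → X) (hprox : IsProx g prox)
    (PU RU T : X → X)
    (hPU : ∀ z, PU z = (U.orthogonalProjectionOnto z : X))
    (hRU : ∀ z, RU z = 2 • PU z - z)
    (hT : ∀ z, T z = z - PU z + prox (RU z))
    (v : X)
    (hv : IsMetricProj (closure (Set.range fun z => z - T z)) 0 v)
    (hvgap : IsMetricProj (closure ((U : Set X) - {z | g z ≠ ⊤})) 0 v)
    (hvU : v ∈ Uᗮ)
    (hCQ : ∃ u w : X, u ∈ Uᗮ ∧ EConj g w ≠ ⊤ ∧ u + w = 0)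
    (Z : Set X)
    (hZ : Z = {z | ∃ a b : X, a ∈ normalCone U z ∧ b ∈ ESubdiff g (z - v) ∧ v = a + b})
    (hZne : Z.Nonempty)
    (PZ : X → X) (hPZ : ∀ w : X, IsMetricProj Z w (PZ w))
    (hPZweak : ∀ (s : ℕ → X) (a : X),
      (∀ w : X, Tendsto (fun n => (⟪s n, w⟫ : ℝ)) atTop (𝓝 ⟪a, w⟫)) →
      ∀ w : X, Tendsto (fun n => (⟪PZ (s n), w⟫ : ℝ)) atTop (𝓝 ⟪PZ a, w⟫))
    (F : Set X) (hF : F = {z | z = T (z + v)})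
    (PF : X → X) (hPF : ∀ w : X, IsMetricProj F w (PF w))
    (x y : X)
    (hy : Tendsto (fun n : ℕ => PF ((n : ℝ) • v + T^[n] x)) atTop (𝓝 y)) :
    -- the shadow sequence converges weakly to `P_U y`, a minimizer of `g(·−v)` over `U`
    (∀ w : X, Tendsto (fun n : ℕ => (⟪PU (T^[n] x), w⟫ : ℝ)) atTop (𝓝 ⟪PU y, w⟫)) ∧
    PU y ∈ U ∧ (∀ u ∈ U, g (PU y - v) ≤ g (u - v)) ∧
    -- identity and weak convergence of `Prox_g (R_U Tⁿ x)`
    (∀ n : ℕ, T^[n+1] x - T^[n] x + PU (T^[n] x) = prox (RU (T^[n] x))) ∧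
    (∀ w : X, Tendsto (fun n : ℕ => (⟪prox (RU (T^[n] x)), w⟫ : ℝ)) atTop
      (𝓝 ⟪-v + PU y, w⟫)) ∧
    -- the function values converge to the minimum
    Tendsto (fun n : ℕ => g (prox (RU (T^[n] x)))) atTop
      (𝓝 (⨅ u : U, g ((u : X) - v))) :=
  DR_main_result_general U g hgproper hglsc hgconv prox hprox PU RU T hPU hRU hT v hv hvU Z hZ hZne
    PZ hPZ hPZweak F hF PF hPF x y hy
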